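/- arXiv:1709.09288 — 3 statements merged into one kernel-verified Lean document; each statement's English description precedes it below -/
import Mathlib

section
/- Let G be an abelian group, let n ≥ k ≥ 1 be integers, let S be a finite multiset (sequence) of elements of G having a sub-multiset S' with max multiplicity h(S') ≤ n and |S'| ≥ n. Let T be a sub-multiset of S of maximal cardinality subject to h(T) ≤ k ≤ |T| and |T| ≤ |S'| - (n - k). Then there exists a sub-multiset T' of S \ T such that |T| + |T'| = |S'| and h(T') ≤ n - k ≤ |T'|. -/
/-!
Put `c = n - k` and `s = |S'| - |T| ≥ c`. A sub-multiset of `S \ T` of size `s` with all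
multiplicities at most `c` exists as soon as `s` is at most the size of `S \ T` with every
multiplicity capped at `c`. If `|T| = |S'| - c`, then `s = c` and this capped multiset has size
at least `min |S \ T| c = c`. Otherwise maximality of `T` forces every element left in `S \ T`
to occur exactly `k` times in `T`, and since `S'` has multiplicities at most `k + c`, we get
`S' ≤ T + cap_c(S \ T)`, whence `s ≤ |cap_c(S \ T)|`.
-/

namespace Multiset

variable {α : Type*}

theorem exists_le_card_eq_of_le_card {M : Multiset α} {s : ℕ} (h : s ≤ card M) :
    ∃ U ≤ M, card U = s := by
  obtain ⟨U, hU⟩ := card_pos_iff_exists_mem.1 <|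
    (card_powersetCard s M).symm ▸ Nat.choose_pos h
  exact ⟨U, mem_powersetCard.1 hU⟩

variable [DecidableEq α]

def capCount (M : Multiset α) (c : ℕ) : Multiset α := M ∩ c • M.dedup

@[simp]
theorem count_capCount (M : Multiset α) (c : ℕ) (a : α) :
    count a (M.capCount c) = min (count a M) c := by
  by_cases ha : a ∈ M
  · simp [capCount, count_inter, count_nsmul, ha]
  · simp [capCount, count_inter, count_eq_zero_of_notMem ha]

theorem capCount_le (M : Multiset α) (c : ℕ) : M.capCount c ≤ M := inter_le_left

theorem min_card_le_card_capCount (M : Multiset α) (c : ℕ) :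
    min (card M) c ≤ card (M.capCount c) := by
  by_cases h : ∃ a, c ≤ count a M
  · obtain ⟨a, ha⟩ := h
    calc min (card M) c ≤ c := min_le_right _ _
      _ = count a (M.capCount c) := by rw [count_capCount, min_eq_right ha]
      _ ≤ card (M.capCount c) := count_le_card _ _
  · simp only [not_exists, not_le] at h
    have : M.capCount c = M := ext.2 fun a => by rw [count_capCount, min_eq_left (h a).le]
    rw [this]
    exact min_le_left _ _

theorem exists_le_card_eq_forall_count_le {M : Multiset α} {s c : ℕ}
    (h : s ≤ card (M.capCount c)) : ∃ U ≤ M, card U = s ∧ ∀ a, count a U ≤ c := by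
  obtain ⟨U, hU, rfl⟩ := exists_le_card_eq_of_le_card h
  exact ⟨U, hU.trans (capCount_le M c), rfl, fun a =>
    (count_le_of_le a hU).trans (by rw [count_capCount]; exact min_le_right _ _)⟩

theorem le_add_capCount_sub {S S' T : Multiset α} {k c : ℕ} (hS' : S' ≤ S)
    (hS'c : ∀ a, count a S' ≤ k + c) (hT : ∀ a ∈ S - T, count a T = k) :
    S' ≤ T + (S - T).capCount c := by
  refine le_iff_count.2 fun a => ?_
  have hS'S := count_le_of_le a hS'
  rw [count_add, count_capCount, count_sub]
  by_cases ha : a ∈ S - T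
  · have := hT a ha
    have := hS'c a
    omega
  · rw [mem_sub] at ha
    omega

theorem cons_le_of_mem_sub {S T : Multiset α} {a : α} (hT : T ≤ S) (ha : a ∈ S - T) :
    a ::ₘ T ≤ S := by
  simpa [add_tsub_cancel_of_le hT, add_comm, ← singleton_add] using
    add_le_add_left (singleton_le.2 ha) T

end Multiset

open Multiset

theorem stmt6_general {G : Type*} [DecidableEq G] (n k : ℕ) (hkn : k ≤ n)
    (S S' : Multiset G) (hS' : S' ≤ S)
    (hS'h : ∀ g : G, S'.count g ≤ n) (hS'c : n ≤ Multiset.card S')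
    (T : Multiset G) (hT : T ≤ S)
    (hTh : ∀ g : G, T.count g ≤ k) (hTc : k ≤ Multiset.card T)
    (hTb : Multiset.card T ≤ Multiset.card S' - (n - k))
    (hTmax : ∀ U : Multiset G, U ≤ S → (∀ g : G, U.count g ≤ k) →
      k ≤ Multiset.card U → Multiset.card U ≤ Multiset.card S' - (n - k) →
      Multiset.card U ≤ Multiset.card T) :
    ∃ T' : Multiset G, T' ≤ S - T ∧
      Multiset.card T + Multiset.card T' = Multiset.card S' ∧
      (∀ g : G, T'.count g ≤ n - k) ∧ n - k ≤ Multiset.card T' := by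
  obtain ⟨T', hT'S, hT'card, hT'count⟩ : ∃ T' ≤ S - T,
      card T' = card S' - card T ∧ ∀ g, count g T' ≤ n - k := by
    refine exists_le_card_eq_forall_count_le ?_
    rcases hTb.eq_or_lt with hTeq | hTlt
    · have hcard : card S' - card T ≤ card (S - T) :=
        card_sub hT ▸ tsub_le_tsub_right (card_le_card hS') _
      exact (le_min hcard (by omega)).trans (min_card_le_card_capCount ..)
    · have hfull : ∀ g ∈ S - T, count g T = k := fun g hg => by
        by_contra hne
        have hgT : count g T < k := (hTh g).lt_of_ne hne
        have hcount : ∀ a, count a (g ::ₘ T) ≤ k := fun a => by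
          rw [count_cons]
          split_ifs with h
          exacts [h ▸ hgT, hTh a]
        have := hTmax (g ::ₘ T) (cons_le_of_mem_sub hT hg) hcount
          (by rw [card_cons]; omega) (by rw [card_cons]; omega)
        rw [card_cons] at this
        omega
      have hS'le : ∀ g, count g S' ≤ k + (n - k) := fun g => (hS'h g).trans (by omega)
      have hcard := card_le_card (le_add_capCount_sub hS' hS'le hfull)
      rw [card_add] at hcard
      omega
  exact ⟨T', hT'S, by omega, hT'count, by omega⟩

theorem stmt6 {G : Type*} [AddCommGroup G] [DecidableEq G] (n k : ℕ) (hk : 1 ≤ k) (hkn : k ≤ n)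
    (S S' : Multiset G) (hS' : S' ≤ S)
    (hS'h : ∀ g : G, S'.count g ≤ n) (hS'c : n ≤ Multiset.card S')
    (T : Multiset G) (hT : T ≤ S)
    (hTh : ∀ g : G, T.count g ≤ k) (hTc : k ≤ Multiset.card T)
    (hTb : Multiset.card T ≤ Multiset.card S' - (n - k))
    (hTmax : ∀ U : Multiset G, U ≤ S → (∀ g : G, U.count g ≤ k) →
      k ≤ Multiset.card U → Multiset.card U ≤ Multiset.card S' - (n - k) →
      Multiset.card U ≤ Multiset.card T) :
    ∃ T' : Multiset G, T' ≤ S - T ∧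
      Multiset.card T + Multiset.card T' = Multiset.card S' ∧
      (∀ g : G, T'.count g ≤ n - k) ∧ n - k ≤ Multiset.card T' :=
  stmt6_general n k hkn S S' hS' hS'h hS'c T hT hTh hTc hTb hTmax
end

section
/- Let G be an abelian group, let n ≥ 1, and let S be a finite multiset of elements of G. Then there exists a setpartition A_1, ..., A_n of S into n nonempty subsets (i.e., nonempty finite sets A_i ⊆ G whose disjoint union as multisets equals S) if and only if h(S) ≤ n ≤ |S|. -/
/-!
Necessity: a part contains each element at most once and at least one element. Sufficiency, by
induction on `S`: when `|S| = n` use singletons; otherwise, after partitioning `S` into `n` parts,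
an element `g` added to `S` occurs in fewer than `n` of them as long as its new multiplicity is
still at most `n`, so it can be inserted into a part that misses it.
-/

section

open Finset

variable {ι G : Type*} [Fintype ι]

def IsSetPartition (A : ι → Finset G) (S : Multiset G) : Prop :=
  (∀ i, (A i).Nonempty) ∧ ∑ i, (A i).val = S

theorem Multiset.count_sum_finset_val [DecidableEq G] (A : ι → Finset G) (g : G) :
    (∑ i, (A i).val).count g = #{i | g ∈ A i} := by
  simp only [Multiset.count_sum', Multiset.count_eq_of_nodup (A _).nodup, Finset.mem_val,
    Finset.sum_boole, Nat.cast_id]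

namespace IsSetPartition

theorem count_le_card [DecidableEq G] {A : ι → Finset G} {S : Multiset G}
    (hA : IsSetPartition A S) (g : G) :
    S.count g ≤ Fintype.card ι := by
  rw [← hA.2, Multiset.count_sum_finset_val]
  exact card_filter_le _ _

theorem card_le_card {A : ι → Finset G} {S : Multiset G} (hA : IsSetPartition A S) :
    Fintype.card ι ≤ Multiset.card S := by
  rw [← hA.2, Multiset.card_sum, Fintype.card_eq_sum_ones]
  exact sum_le_sum fun i _ => (hA.1 i).card_pos

theorem exists_cons [DecidableEq ι] [DecidableEq G] {A : ι → Finset G} {S : Multiset G}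
    (hA : IsSetPartition A S) {g : G} (hg : S.count g < Fintype.card ι) :
    ∃ B : ι → Finset G, IsSetPartition B (g ::ₘ S) := by
  obtain ⟨i, hi⟩ : ∃ i, g ∉ A i := by
    by_contra! h
    rw [← hA.2, Multiset.count_sum_finset_val, filter_true_of_mem fun i _ => h i] at hg
    exact lt_irrefl _ hg
  refine ⟨Function.update A i (insert g (A i)), fun j => ?_, ?_⟩
  · rcases eq_or_ne j i with rfl | hji
    · simp
    · simpa [hji] using hA.1 j
  · rw [← hA.2, ← sum_erase_add _ _ (mem_univ i), ← sum_erase_add _ _ (mem_univ i)]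
    simp only [Function.update_self, insert_val_of_notMem hi, Multiset.add_cons]
    congr 2
    exact sum_congr rfl fun j hj => by rw [Function.update_of_ne (ne_of_mem_erase hj)]

end IsSetPartition

theorem exists_isSetPartition_singletons (S : Multiset G) :
    ∃ A : Fin (Multiset.card S) → Finset G, IsSetPartition A S := by
  refine ⟨fun i => {S.toList[i.cast S.length_toList.symm]}, fun _ => singleton_nonempty _, ?_⟩
  calc _ = ∑ i : Fin S.toList.length, ({S.toList[i]} : Multiset G) :=
        Fintype.sum_equiv (finCongr S.length_toList.symm) _ _ fun _ => rfl
    _ = (S.toList.map fun a => {a}).sum := Fin.sum_univ_fun_getElem _ _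
    _ = S := by
      rw [← Multiset.sum_coe, ← Multiset.map_coe, S.coe_toList, Multiset.sum_map_singleton]

theorem exists_isSetPartition_of_count_le_of_le_card [DecidableEq G] {n : ℕ} {S : Multiset G}
    (hcount : ∀ g, S.count g ≤ n) (hcard : n ≤ Multiset.card S) :
    ∃ A : Fin n → Finset G, IsSetPartition A S := by
  induction S using Multiset.induction_on with
  | empty =>
    obtain rfl : n = Multiset.card 0 := le_antisymm hcard zero_le
    exact exists_isSetPartition_singletons 0
  | cons g T ih =>
    rcases hcard.eq_or_lt with rfl | hlt
    · exact exists_isSetPartition_singletons _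
    have hcountT (x : G) : T.count x ≤ n :=
      (Multiset.count_le_of_le x (Multiset.le_cons_self T g)).trans (hcount x)
    obtain ⟨A, hA⟩ := ih hcountT (by simpa [Nat.lt_succ_iff] using hlt)
    have hcount_g : T.count g < Fintype.card (Fin n) := by
      rw [Fintype.card_fin, ← Nat.add_one_le_iff, ← Multiset.count_cons_self]
      exact hcount g
    exact hA.exists_cons hcount_g

end

theorem stmt7_general {G : Type*} [DecidableEq G] (n : ℕ)
    (S : Multiset G) :
    (∃ A : Fin n → Finset G, (∀ i, (A i).Nonempty) ∧ (∑ i, (A i).val) = S) ↔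
      ((∀ g : G, S.count g ≤ n) ∧ n ≤ Multiset.card S) := by
  refine ⟨fun ⟨A, hA⟩ => ?_, fun ⟨hcount, hcard⟩ => ?_⟩
  · simpa using And.intro (IsSetPartition.count_le_card hA) (IsSetPartition.card_le_card hA)
  · exact exists_isSetPartition_of_count_le_of_le_card hcount hcard

theorem stmt7 {G : Type*} [AddCommGroup G] [DecidableEq G] (n : ℕ) (hn : 1 ≤ n)
    (S : Multiset G) :
    (∃ A : Fin n → Finset G, (∀ i, (A i).Nonempty) ∧ (∑ i, (A i).val) = S) ↔
      ((∀ g : G, S.count g ≤ n) ∧ n ≤ Multiset.card S) :=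
  stmt7_general n S
end

section
/- Let G = K ⊕ ⟨g⟩ be a finite abelian group with K nontrivial and ord(g) = exp(G) = m ≥ 3, and let X = K ∪ {g}. Then the (m−1)-fold sumset (m−1)X equals K ∪ (g + K) ∪ (2g + K) ∪ ... ∪ ((m−2)g + K) ∪ {(m−1)g}, so |(m−1)X| = (m−1)|K| + 1. -/
open Pointwise

private lemma aux_distinct {G : Type*} [AddCommGroup G]
    (K : AddSubgroup G) (g : G) (m : ℕ)
    (hcompl : IsCompl K (AddSubgroup.zmultiples g))
    (hord : addOrderOf g = m) :
    ∀ i j : ℕ, i < m → j < m → ∀ k ∈ K, ∀ k' ∈ K,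
      i • g + k = j • g + k' → i = j := by
  have main : ∀ i j : ℕ, i ≤ j → j < m → ∀ k ∈ K, ∀ k' ∈ K,
      i • g + k = j • g + k' → i = j := by
    intro i j hij hj k hk k' hk' heq
    have h1 : (j - i) • g = k - k' := by
      rw [sub_nsmul _ hij]
      have h2 : j • g = i • g + k - k' := eq_sub_of_add_eq heq.symm
      rw [h2]; abel
    have hmem : (j - i) • g ∈ K ⊓ AddSubgroup.zmultiples g := by
      refine AddSubgroup.mem_inf.mpr ⟨?_, ?_⟩
      · rw [h1]; exact sub_mem hk hk'
      · rw [AddSubgroup.mem_zmultiples_iff]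
        exact ⟨(j - i : ℕ), natCast_zsmul g _⟩
    rw [hcompl.inf_eq_bot] at hmem
    have hdvd : m ∣ (j - i) := by
      rw [← hord]
      exact addOrderOf_dvd_of_nsmul_eq_zero hmem
    rcases Nat.eq_zero_of_dvd_of_lt hdvd (by omega) with h
    omega
  intro i j hi hj k hk k' hk' heq
  rcases le_total i j with h | h
  · exact main i j h hj k hk k' hk' heq
  · exact (main j i h hi k' hk' k hk heq.symm).symm

private lemma aux_set {G : Type*} [AddCommGroup G] (K : AddSubgroup G) (g : G) :
    ∀ n : ℕ, (n + 1) • ((K : Set G) ∪ {g}) =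
      (⋃ j ∈ Set.Iio (n + 1), ((j • g) +ᵥ (K : Set G))) ∪ {(n + 1) • g} := by
  intro n
  induction n with
  | zero =>
      ext x
      simp [Set.mem_vadd_set]
  | succ n ih =>
      rw [succ_nsmul, ih]
      ext x
      simp only [Set.mem_add, Set.mem_union, Set.mem_iUnion, Set.mem_vadd_set,
        Set.mem_singleton_iff, SetLike.mem_coe, Set.mem_Iio, exists_prop, vadd_eq_add]
      constructor
      · rintro ⟨a, (⟨j, hj, k, hk, rfl⟩ | rfl), b, (hb | rfl), rfl⟩
        · exact Or.inl ⟨j, by omega, k + b, K.add_mem hk hb, by abel⟩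
        · refine Or.inl ⟨j + 1, by omega, k, hk, ?_⟩
          rw [succ_nsmul]; abel
        · exact Or.inl ⟨n + 1, by omega, b, hb, rfl⟩
        · right; rw [succ_nsmul, succ_nsmul, succ_nsmul]
      · rintro (⟨j, hj, k, hk, rfl⟩ | rfl)
        · rcases Nat.lt_or_ge j (n + 1) with h | h
          · exact ⟨j • g + k, Or.inl ⟨j, h, k, hk, rfl⟩, 0, Or.inl K.zero_mem, by abel⟩
          · have : j = n + 1 := by omega
            subst this
            exact ⟨(n + 1) • g, Or.inr rfl, k, Or.inl hk, rfl⟩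
        · refine ⟨(n + 1) • g, Or.inr rfl, g, Or.inr rfl, ?_⟩
          rw [succ_nsmul, succ_nsmul, succ_nsmul]

theorem stmt18 {G : Type*} [AddCommGroup G] [Fintype G]
    (K : AddSubgroup G) (g : G) (m : ℕ)
    (hcompl : IsCompl K (AddSubgroup.zmultiples g))
    (hord : addOrderOf g = m) (hexp : AddMonoid.exponent G = m)
    (hm : 3 ≤ m) (hK : K ≠ ⊥)
    (X : Set G) (hX : X = (K : Set G) ∪ {g}) :
    (m - 1) • X = (⋃ j ∈ Set.Iio (m - 1), ((j • g) +ᵥ (K : Set G))) ∪ {(m - 1) • g} ∧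
      ((m - 1) • X).ncard = (m - 1) * Nat.card K + 1 := by
  have hdist := aux_distinct K g m hcompl hord
  obtain ⟨n, hn⟩ : ∃ n, m - 1 = n + 1 := ⟨m - 2, by omega⟩
  have hset : (m - 1) • X = (⋃ j ∈ Set.Iio (m - 1), ((j • g) +ᵥ (K : Set G))) ∪ {(m - 1) • g} := by
    rw [hX, hn]; exact aux_set K g n
  refine ⟨hset, ?_⟩
  rw [hset]
  -- cardinality of the union of cosets
  have hcard : ∀ N : ℕ, N ≤ m →
      (⋃ j, ⋃ (_ : j < N), ((j • g) +ᵥ (K : Set G))).ncard = N * Nat.card K := by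
    intro N
    induction N with
    | zero => intro _; simp
    | succ N ihN =>
        intro hNm
        rw [Set.biUnion_lt_succ, Set.ncard_union_eq ?_ (Set.toFinite _) (Set.toFinite _)]
        · rw [ihN (by omega), Set.ncard_vadd_set]
          have : (K : Set G).ncard = Nat.card K := by
            rw [← Nat.card_coe_set_eq]; rfl
          rw [this]; ring
        · rw [Set.disjoint_left]
          rintro x hx hx'
          simp only [Set.mem_iUnion, Set.mem_vadd_set, SetLike.mem_coe, Set.mem_Iio,
            exists_prop, vadd_eq_add] at hx hx'
          obtain ⟨j, hj, k, hk, rfl⟩ := hx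
          obtain ⟨k', hk', heq⟩ := hx'
          have := hdist N j (by omega) (by omega) k' hk' k hk heq
          omega
  have hnot : (m - 1) • g ∉ ⋃ j ∈ Set.Iio (m - 1), ((j • g) +ᵥ (K : Set G)) := by
    intro hmem
    simp only [Set.mem_iUnion, Set.mem_vadd_set, SetLike.mem_coe, Set.mem_Iio,
      exists_prop, vadd_eq_add] at hmem
    obtain ⟨j, hj, k, hk, heq⟩ := hmem
    have := hdist j (m - 1) (by omega) (by omega) k hk 0 K.zero_mem (by rw [heq]; abel)
    omega
  rw [Set.union_singleton, Set.ncard_insert_of_notMem hnot (Set.toFinite _)]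
  simp only [Set.mem_Iio]
  rw [hcard (m - 1) (by omega)]
end
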